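/- Periodicity and explicit form of the dynamical sequences for λ = 1/(k+Φ) (Theorem 4.3). With the dynamical sequences (y_n), (p_n) defined as in the context and μ̄ = ν/Φ³: (1) if |μ| > μ̄, then p_{n+2} = p_n for all n ≥ 0; more precisely, for every even n ≥ 0, p_n = 1/(C·Φ) and ℓ(y_n) = C·λ·Φ^{n+1}, and for every odd n ≥ 1, p_n = 1 − 1/(D·Φ) and ℓ(y_n) = D·λ·Φ^{n+1}; (2) if |μ| ≤ μ̄, then p_{n+1} = p_n for all n ≥ 1; more precisely, if −μ̄ < μ < −ν then for every n ≥ 1, p_n = 1 − Φ/D and ℓ(y_n) = D·λ·Φ^{2n}, while if ν < μ < μ̄ then for every n ≥ 0, p_n = Φ/C and ℓ(y_n) = C·λ·Φ^{2n+1}. -/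

import Mathlib

open Real Set
open scoped Classical

noncomputable section

/-- The reciprocal golden ratio Φ = (√5 − 1)/2. -/
def Phi : ℝ := (Real.sqrt 5 - 1) / 2

/-- C = 2μ/(μ+ν). -/
def CC (mu nu : ℝ) : ℝ := 2 * mu / (mu + nu)

/-- D = 2μ/(μ−ν). -/
def DD (mu nu : ℝ) : ℝ := 2 * mu / (mu - nu)

/-- ℓ(y) = 2y/ν. -/
def ell (nu y : ℝ) : ℝ := 2 * y / nu

/-- One step of the recursion defining the dynamical sequences
(y_n, p_n, κ_n) ↦ (y_{n+1}, p_{n+1}, κ_{n+1}). -/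
def dynStep (lam nu mu : ℝ) : ℝ × ℝ × ℕ → ℝ × ℝ × ℕ := fun s =>
  let y := s.1
  let p := s.2.1
  let kap := s.2.2
  let C := CC mu nu
  let D := DD mu nu
  let y' : ℝ := if p < 1 / C then (1 - C * p) * y
    else if 1 / C < p then (1 - D * (1 - p)) * y else 0
  let kap' : ℕ := if p < 1 / C then sInf {m : ℕ | lam * Phi ^ (2 * m) < ell nu y'}
    else if 1 / C < p then sInf {m : ℕ | lam * Phi ^ (2 * m + 1) < ell nu y'}
    else kap
  let Ups : ℝ := if p ≤ 1 / C then lam * Phi ^ (2 * kap')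
    else if 1 < ell nu y' then 1
    else if lam * Phi < ell nu y' then
      1 - ((1 + ⌊(1 - ell nu y') / lam⌋ : ℤ) : ℝ) * lam
    else lam * Phi ^ (2 * kap' + 1)
  let p' : ℝ := if p < 1 / C then Ups / ell nu y'
    else if 1 / C < p then 1 - Ups / ell nu y' else 0
  (y', p', kap')

/-- The dynamical sequences (y_n, p_n, κ_n). -/
def dynSeq (lam eta nu mu : ℝ) : ℕ → ℝ × ℝ × ℕ
  | 0 =>
      (eta * mu * nu / (mu + nu),
        lam * Phi ^ (2 * sInf {m : ℕ | lam * Phi ^ (2 * m) < ell nu (eta * mu * nu / (mu + nu))})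
          / ell nu (eta * mu * nu / (mu + nu)),
        sInf {m : ℕ | lam * Phi ^ (2 * m) < ell nu (eta * mu * nu / (mu + nu))})
  | n + 1 => dynStep lam nu mu (dynSeq lam eta nu mu n)

/-- y_n. -/
def yseq (lam eta nu mu : ℝ) (n : ℕ) : ℝ := (dynSeq lam eta nu mu n).1

/-- p_n. -/
def pseq (lam eta nu mu : ℝ) (n : ℕ) : ℝ := (dynSeq lam eta nu mu n).2.1

/-!
Everything is governed by the windows (λΦ^e, λΦ^(e-2)]: the index κ of the recursion is the one
for which ℓ lies in the window with e = 2κ (lower branch) or e = 2κ + 1 (upper branch), and in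
the latter case Υ = λΦ^(2κ+1); for κ = 0 this is the floor formula, because λ(k + Φ) = 1.
Since 1/C + 1/D = 1 and Φ² = 1 - Φ, the factors 1 - Cp and 1 - D(1 - p) met along the orbit
are CΦ/D, DΦ/C or Φ², so ℓ_n stays of the form c·λ·Φ^i with c ∈ {C, D}, and p_n can be read
off. Which window c·λ·Φ^i falls into depends only on whether 1 < cΦ and cΦ³ ≤ 1 (then p
alternates) or Φ < c ≤ 1/Φ (then p is constant), and for C = 2μ/(μ+ν), D = 2μ/(μ-ν) these
conditions amount to |μ| > μ̄ or |μ| ≤ μ̄.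
-/
lemma Phi_eq_neg_goldenConj : Phi = -goldenConj := by
  unfold Phi goldenConj; ring

lemma Phi_sq : Phi ^ 2 = 1 - Phi := by
  rw [Phi_eq_neg_goldenConj, neg_sq, goldenConj_sq]; ring

lemma Phi_pos : 0 < Phi := by
  rw [Phi_eq_neg_goldenConj]; exact neg_pos.2 goldenConj_neg

lemma Phi_lt_one : Phi < 1 := by
  rw [Phi_eq_neg_goldenConj]; linarith [neg_one_lt_goldenConj]

lemma Phi_cube : Phi ^ 3 = 2 * Phi - 1 := by
  linear_combination (Phi - 1) * Phi_sq

lemma Phi_lt_two_thirds : Phi < 2 / 3 := by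
  nlinarith [Phi_sq, Phi_pos]

lemma CC_eq_DD_neg (mu nu : ℝ) : CC mu nu = DD (-mu) nu := by
  unfold CC DD; rw [← neg_div_neg_eq]; ring_nf

lemma DD_eq_CC_neg (mu nu : ℝ) : DD mu nu = CC (-mu) nu := by
  unfold CC DD; rw [← neg_div_neg_eq]; ring_nf

section Constants

variable {mu nu : ℝ}

lemma one_div_CC_add_one_div_DD (hmu : mu ≠ 0) : 1 / CC mu nu + 1 / DD mu nu = 1 := by
  unfold CC DD; rw [one_div_div, one_div_div]; field_simp; ring

lemma one_lt_CC_mul_Phi_iff (hnu : 0 < nu) (hmu : 0 < mu) :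
    1 < CC mu nu * Phi ↔ nu / Phi ^ 3 < mu := by
  rw [CC, div_mul_eq_mul_div, one_lt_div (by linarith), div_lt_iff₀ (pow_pos Phi_pos 3),
    Phi_cube]
  constructor <;> intro <;> nlinarith

lemma Phi_lt_CC (hnu : 0 < nu) (h : nu < mu) : Phi < CC mu nu := by
  rw [CC, lt_div_iff₀ (by linarith)]; nlinarith [Phi_lt_one, Phi_pos]

lemma CC_mul_Phi_cube_le_one (hnu : 0 < nu) (hmu : 0 < mu) : CC mu nu * Phi ^ 3 ≤ 1 := by
  rw [CC, div_mul_eq_mul_div, div_le_one (by linarith), Phi_cube]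
  nlinarith [Phi_lt_two_thirds]

lemma one_lt_DD_mul_Phi (hnu : 0 < nu) (h : nu < mu) : 1 < DD mu nu * Phi := by
  rw [DD, div_mul_eq_mul_div, one_lt_div (by linarith)]
  nlinarith [Phi_sq, Phi_pos, Phi_lt_one]

lemma DD_mul_Phi_cube_le_one (hnu : 0 < nu) (h : nu / Phi ^ 3 < mu) :
    DD mu nu * Phi ^ 3 ≤ 1 := by
  have hmu : 0 < mu := (div_pos hnu (pow_pos Phi_pos 3)).trans h
  have h' := (div_lt_iff₀ (pow_pos Phi_pos 3)).1 h
  rw [Phi_cube] at h' ⊢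
  rw [DD, div_mul_eq_mul_div, div_le_one (by nlinarith [Phi_lt_one])]
  nlinarith [mul_pos hmu (sub_pos.2 Phi_lt_two_thirds)]

lemma CC_mul_Phi_le_one_iff (hnu : 0 < nu) (hmu : 0 < mu) :
    CC mu nu * Phi ≤ 1 ↔ mu ≤ nu / Phi ^ 3 := by
  rw [← not_lt, one_lt_CC_mul_Phi_iff hnu hmu, not_lt]

lemma periodic_bounds (hnu : 0 < nu) (h : nu / Phi ^ 3 < mu) :
    1 < CC mu nu * Phi ∧ CC mu nu * Phi ^ 3 ≤ 1 ∧ 1 < DD mu nu * Phi ∧ DD mu nu * Phi ^ 3 ≤ 1 := by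
  have hmu : 0 < mu := (div_pos hnu (pow_pos Phi_pos 3)).trans h
  have hνμ : nu < mu := (le_div_self hnu.le (pow_pos Phi_pos 3)
    (pow_le_one₀ Phi_pos.le Phi_lt_one.le)).trans_lt h
  exact ⟨(one_lt_CC_mul_Phi_iff hnu hmu).2 h, CC_mul_Phi_cube_le_one hnu hmu,
    one_lt_DD_mul_Phi hnu hνμ, DD_mul_Phi_cube_le_one hnu h⟩

end Constants

lemma mul_pow_div_mul_pow_succ {a q : ℝ} (ha : a ≠ 0) (hq : q ≠ 0) (c : ℝ) (e : ℕ) :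
    a * q ^ e / (c * a * q ^ (e + 1)) = 1 / (c * q) := by
  rcases eq_or_ne c 0 with rfl | hc
  · simp
  · field_simp; ring

lemma mul_pow_succ_div_mul_pow {a q : ℝ} (ha : a ≠ 0) (hq : q ≠ 0) (c : ℝ) (e : ℕ) :
    a * q ^ (e + 1) / (c * a * q ^ e) = q / c := by
  rcases eq_or_ne c 0 with rfl | hc
  · simp
  · field_simp; ring

lemma ell_mul_div_two {nu : ℝ} (hnu : nu ≠ 0) (x : ℝ) : ell nu (nu * x / 2) = x := by
  unfold ell; field_simp

lemma pos_of_mul_add_Phi_eq_one {k : ℕ} {lam : ℝ} (hlamk : lam * (k + Phi) = 1) : 0 < lam :=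
  pos_of_mul_pos_left (hlamk ▸ one_pos) (add_pos_of_nonneg_of_pos k.cast_nonneg Phi_pos).le

lemma one_sub_mul_one_sub_one_div_mul {C D : ℝ} (hC : C ≠ 0) (hD : D ≠ 0)
    (hCD : 1 / C + 1 / D = 1) : (1 - D * (1 - 1 / (C * Phi))) * C = D * Phi := by
  have hΦ := Phi_pos.ne'
  have hCD' : C + D = C * D := by field_simp at hCD; linarith
  field_simp
  linear_combination Phi * hCD' - D * Phi_sq

/-- `x ∈ (λΦ^e, λΦ^(e-2)]`, written without negative exponents. -/
def InWindow (lam : ℝ) (e : ℕ) (x : ℝ) : Prop :=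
  lam * Phi ^ e < x ∧ Phi ^ 2 * x ≤ lam * Phi ^ e

lemma inWindow_of_one_lt_mul_Phi {lam c : ℝ} (hlam : 0 < lam) (hc : 1 < c * Phi)
    (hc3 : c * Phi ^ 3 ≤ 1) (e : ℕ) : InWindow lam e (c * lam * Phi ^ (e + 1)) := by
  have h := mul_pos hlam (pow_pos Phi_pos e)
  constructor
  · calc lam * Phi ^ e = lam * Phi ^ e * 1 := (mul_one _).symm
      _ < lam * Phi ^ e * (c * Phi) := mul_lt_mul_of_pos_left hc h
      _ = c * lam * Phi ^ (e + 1) := by ring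
  · calc Phi ^ 2 * (c * lam * Phi ^ (e + 1)) = lam * Phi ^ e * (c * Phi ^ 3) := by ring
      _ ≤ lam * Phi ^ e * 1 := mul_le_mul_of_nonneg_left hc3 h.le
      _ = lam * Phi ^ e := mul_one _

lemma inWindow_of_Phi_lt {lam c : ℝ} (hlam : 0 < lam) (hc : Phi < c) (hc1 : c * Phi ≤ 1)
    (e : ℕ) : InWindow lam (e + 1) (c * lam * Phi ^ e) := by
  have h := mul_pos hlam (pow_pos Phi_pos e)
  constructor
  · calc lam * Phi ^ (e + 1) = lam * Phi ^ e * Phi := by ring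
      _ < lam * Phi ^ e * c := mul_lt_mul_of_pos_left hc h
      _ = c * lam * Phi ^ e := by ring
  · calc Phi ^ 2 * (c * lam * Phi ^ e) = lam * Phi ^ (e + 1) * (c * Phi) := by ring
      _ ≤ lam * Phi ^ (e + 1) * 1 :=
        mul_le_mul_of_nonneg_left hc1 (mul_pos hlam (pow_pos Phi_pos _)).le
      _ = lam * Phi ^ (e + 1) := mul_one _

lemma sInf_eq_of_inWindow {lam x : ℝ} {r κ : ℕ} (hlam : 0 ≤ lam)
    (hx : InWindow lam (2 * κ + r) x) : sInf {m : ℕ | lam * Phi ^ (2 * m + r) < x} = κ := by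
  refine IsLeast.csInf_eq ⟨hx.1, fun m hm => not_lt.1 fun hmκ => ?_⟩
  have hpow : lam * Phi ^ (2 * κ + r) ≤ Phi ^ 2 * (lam * Phi ^ (2 * m + r)) :=
    calc lam * Phi ^ (2 * κ + r) ≤ lam * Phi ^ (2 * m + r + 2) :=
          mul_le_mul_of_nonneg_left
            (pow_le_pow_of_le_one Phi_pos.le Phi_lt_one.le (by omega)) hlam
      _ = Phi ^ 2 * (lam * Phi ^ (2 * m + r)) := by ring
  have := mul_lt_mul_of_pos_left hm (pow_pos Phi_pos 2)
  linarith [hx.2]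

/-- The error Υ of the upper branch of `dynStep`, as a function of ℓ and κ. -/
def upperError (lam x : ℝ) (κ : ℕ) : ℝ :=
  if 1 < x then 1
  else if lam * Phi < x then 1 - ((1 + ⌊(1 - x) / lam⌋ : ℤ) : ℝ) * lam
  else lam * Phi ^ (2 * κ + 1)

lemma upperError_eq_of_inWindow {k : ℕ} {lam x : ℝ} {κ : ℕ} (hk : 1 ≤ k)
    (hlamk : lam * (k + Phi) = 1) (hx : InWindow lam (2 * κ + 1) x) :
    upperError lam x κ = lam * Phi ^ (2 * κ + 1) := by
  have hkR : (1 : ℝ) ≤ k := by exact_mod_cast hk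
  have hlam : 0 < lam := pos_of_mul_add_Phi_eq_one hlamk
  have hΦx : Phi * x ≤ lam := by
    have := mul_le_mul_of_nonneg_left
      (pow_le_pow_of_le_one Phi_pos.le Phi_lt_one.le (by omega : 1 ≤ 2 * κ + 1)) hlam.le
    nlinarith [hx.2, Phi_pos]
  have hx1 : ¬ 1 < x := by nlinarith [Phi_sq, Phi_pos]
  unfold upperError
  rcases κ with _ | κ
  · have hx0 : lam * Phi < x := by simpa using hx.1
    have hfl : ⌊(1 - x) / lam⌋ = (k : ℤ) - 1 := by
      rw [Int.floor_eq_iff, le_div_iff₀ hlam, div_lt_iff₀ hlam]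
      push_cast
      constructor <;> nlinarith [Phi_sq, Phi_pos]
    rw [if_neg hx1, if_pos hx0, hfl]
    push_cast
    linear_combination -hlamk
  · have hpow : lam * Phi ^ (2 * (κ + 1) + 1) ≤ Phi ^ 2 * (lam * Phi) :=
      calc lam * Phi ^ (2 * (κ + 1) + 1) ≤ lam * Phi ^ 3 := mul_le_mul_of_nonneg_left
            (pow_le_pow_of_le_one Phi_pos.le Phi_lt_one.le (by omega)) hlam.le
        _ = Phi ^ 2 * (lam * Phi) := by ring
    have hxΦ : x ≤ lam * Phi := le_of_mul_le_mul_left (hx.2.trans hpow) (pow_pos Phi_pos 2)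
    rw [if_neg hx1, if_neg hxΦ.not_gt]

section Dynamics

variable {k : ℕ} {lam eta nu mu : ℝ}

lemma dynStep_of_lt_inv_CC {p x x' : ℝ} {κ κ' : ℕ} (hnu : nu ≠ 0) (hlam : 0 ≤ lam)
    (hp : p < 1 / CC mu nu) (hx : (1 - CC mu nu * p) * x = x') (hw : InWindow lam (2 * κ') x') :
    dynStep lam nu mu (nu * x / 2, p, κ) = (nu * x' / 2, lam * Phi ^ (2 * κ') / x', κ') := by
  have hy : (1 - CC mu nu * p) * (nu * x / 2) = nu * x' / 2 := by rw [← hx]; ring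
  have hκ : sInf {m : ℕ | lam * Phi ^ (2 * m) < x'} = κ' := sInf_eq_of_inWindow (r := 0) hlam hw
  simp only [dynStep, if_pos hp, if_pos hp.le, hy, ell_mul_div_two hnu, hκ]

lemma dynStep_of_inv_CC_lt {p x x' : ℝ} {κ κ' : ℕ} (hnu : nu ≠ 0) (hk : 1 ≤ k)
    (hlamk : lam * (k + Phi) = 1) (hp : 1 / CC mu nu < p)
    (hx : (1 - DD mu nu * (1 - p)) * x = x') (hw : InWindow lam (2 * κ' + 1) x') :
    dynStep lam nu mu (nu * x / 2, p, κ) =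
      (nu * x' / 2, 1 - lam * Phi ^ (2 * κ' + 1) / x', κ') := by
  have hlam : 0 < lam := pos_of_mul_add_Phi_eq_one hlamk
  have hy : (1 - DD mu nu * (1 - p)) * (nu * x / 2) = nu * x' / 2 := by rw [← hx]; ring
  have hκ := sInf_eq_of_inWindow hlam.le hw
  have hΥ := upperError_eq_of_inWindow hk hlamk hw
  unfold upperError at hΥ
  simp only [dynStep, if_neg hp.not_gt, if_pos hp, if_neg (not_le.2 hp), hy,
    ell_mul_div_two hnu, hκ, hΥ]

lemma dynSeq_zero_eq {C x : ℝ} {κ : ℕ} (hnu : nu ≠ 0) (heta : eta = lam * Phi)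
    (hC : CC mu nu = C) (hx : C * lam * Phi = x)
    (hκ : sInf {m : ℕ | lam * Phi ^ (2 * m) < x} = κ) :
    dynSeq lam eta nu mu 0 = (nu * x / 2, lam * Phi ^ (2 * κ) / x, κ) := by
  have hy : eta * mu * nu / (mu + nu) = nu * x / 2 := by rw [heta, ← hx, ← hC, CC]; ring
  simp only [dynSeq, hy, ell_mul_div_two hnu, hκ]

end Dynamics

section Orbits

variable {k : ℕ} {lam eta nu mu C D : ℝ}

lemma dynStep_periodic_even (hnu : nu ≠ 0) (hk : 1 ≤ k) (hlamk : lam * (k + Phi) = 1)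
    (hC : CC mu nu = C) (hD : DD mu nu = D) (hCD : 1 / C + 1 / D = 1) (hC1 : 1 < C * Phi)
    (hD1 : 1 < D * Phi) (hD3 : D * Phi ^ 3 ≤ 1) (j : ℕ) :
    dynStep lam nu mu (nu * (C * lam * Phi ^ (2 * j + 1)) / 2, 1 / (C * Phi), j) =
      (nu * (D * lam * Phi ^ (2 * j + 2)) / 2, 1 - 1 / (D * Phi), j) := by
  have hlam : 0 < lam := pos_of_mul_add_Phi_eq_one hlamk
  have hC0 : 0 < C := pos_of_mul_pos_left (one_pos.trans hC1) Phi_pos.le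
  have hD0 : 0 < D := pos_of_mul_pos_left (one_pos.trans hD1) Phi_pos.le
  have hp : 1 / CC mu nu < 1 / (C * Phi) := by
    rw [hC]
    exact one_div_lt_one_div_of_lt (mul_pos hC0 Phi_pos) (mul_lt_of_lt_one_right hC0 Phi_lt_one)
  have hx : (1 - DD mu nu * (1 - 1 / (C * Phi))) * (C * lam * Phi ^ (2 * j + 1)) =
      D * lam * Phi ^ (2 * j + 1 + 1) := by
    rw [hD]
    linear_combination lam * Phi ^ (2 * j + 1) *
      one_sub_mul_one_sub_one_div_mul hC0.ne' hD0.ne' hCD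
  rw [dynStep_of_inv_CC_lt hnu hk hlamk hp hx (inWindow_of_one_lt_mul_Phi hlam hD1 hD3 _),
    mul_pow_div_mul_pow_succ hlam.ne' Phi_pos.ne']

lemma dynStep_periodic_odd (hnu : nu ≠ 0) (hlam : 0 < lam)
    (hC : CC mu nu = C) (hCD : 1 / C + 1 / D = 1) (hC1 : 1 < C * Phi) (hC3 : C * Phi ^ 3 ≤ 1)
    (hD1 : 1 < D * Phi) (j : ℕ) :
    dynStep lam nu mu (nu * (D * lam * Phi ^ (2 * j + 2)) / 2, 1 - 1 / (D * Phi), j) =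
      (nu * (C * lam * Phi ^ (2 * (j + 1) + 1)) / 2, 1 / (C * Phi), j + 1) := by
  have hC0 : 0 < C := pos_of_mul_pos_left (one_pos.trans hC1) Phi_pos.le
  have hD0 : 0 < D := pos_of_mul_pos_left (one_pos.trans hD1) Phi_pos.le
  have hp : 1 - 1 / (D * Phi) < 1 / CC mu nu := by
    have : 1 / D < 1 / (D * Phi) :=
      one_div_lt_one_div_of_lt (mul_pos hD0 Phi_pos) (mul_lt_of_lt_one_right hD0 Phi_lt_one)
    rw [hC, eq_sub_of_add_eq hCD]; linarith
  have hx : (1 - CC mu nu * (1 - 1 / (D * Phi))) * (D * lam * Phi ^ (2 * j + 2)) =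
      C * lam * Phi ^ (2 * (j + 1) + 1) := by
    rw [hC]
    linear_combination lam * Phi ^ (2 * j + 2) *
      one_sub_mul_one_sub_one_div_mul hD0.ne' hC0.ne' ((add_comm _ _).trans hCD)
  rw [dynStep_of_lt_inv_CC hnu hlam.le hp hx
      (inWindow_of_one_lt_mul_Phi hlam hC1 hC3 (2 * (j + 1))),
    mul_pow_div_mul_pow_succ hlam.ne' Phi_pos.ne']

lemma dynStep_const_lower (hnu : nu ≠ 0) (hlam : 0 < lam) (hC : CC mu nu = C)
    (hΦC : Phi < C) (hC1 : C * Phi ≤ 1) (n : ℕ) :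
    dynStep lam nu mu (nu * (C * lam * Phi ^ (2 * n + 1)) / 2, Phi / C, n + 1) =
      (nu * (C * lam * Phi ^ (2 * (n + 1) + 1)) / 2, Phi / C, n + 1 + 1) := by
  have hC0 : 0 < C := Phi_pos.trans hΦC
  have hp : Phi / C < 1 / CC mu nu := by
    rw [hC]; exact div_lt_div_of_pos_right Phi_lt_one hC0
  have hx : (1 - CC mu nu * (Phi / C)) * (C * lam * Phi ^ (2 * n + 1)) =
      C * lam * Phi ^ (2 * (n + 1) + 1) := by
    rw [hC, mul_div_cancel₀ _ hC0.ne']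
    linear_combination (-C * lam * Phi ^ (2 * n + 1)) * Phi_sq
  rw [dynStep_of_lt_inv_CC hnu hlam.le hp hx (κ' := n + 1 + 1)
    (inWindow_of_Phi_lt hlam hΦC hC1 _)]
  congr 2
  exact mul_pow_succ_div_mul_pow hlam.ne' Phi_pos.ne' C _

lemma dynStep_const_upper_zero (hnu : nu ≠ 0) (hk : 1 ≤ k) (hlamk : lam * (k + Phi) = 1)
    (hC : CC mu nu = C) (hD : DD mu nu = D) (hCD : 1 / C + 1 / D = 1) (hC1 : 1 < C * Phi)
    (hΦD : Phi < D) (hD1 : D * Phi ≤ 1) :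
    dynStep lam nu mu (nu * (C * lam * Phi ^ (2 * 0 + 1)) / 2, 1 / (C * Phi), 0) =
      (nu * (D * lam * Phi ^ (2 * 1)) / 2, 1 - Phi / D, 1) := by
  have hlam : 0 < lam := pos_of_mul_add_Phi_eq_one hlamk
  have hC0 : 0 < C := pos_of_mul_pos_left (one_pos.trans hC1) Phi_pos.le
  have hD0 : 0 < D := Phi_pos.trans hΦD
  have hp : 1 / CC mu nu < 1 / (C * Phi) := by
    rw [hC]
    exact one_div_lt_one_div_of_lt (mul_pos hC0 Phi_pos) (mul_lt_of_lt_one_right hC0 Phi_lt_one)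
  have hx : (1 - DD mu nu * (1 - 1 / (C * Phi))) * (C * lam * Phi ^ (2 * 0 + 1)) =
      D * lam * Phi ^ (2 * 1) := by
    rw [hD]
    linear_combination lam * Phi * one_sub_mul_one_sub_one_div_mul hC0.ne' hD0.ne' hCD
  rw [dynStep_of_inv_CC_lt hnu hk hlamk hp hx (inWindow_of_Phi_lt hlam hΦD hD1 _),
    mul_pow_succ_div_mul_pow hlam.ne' Phi_pos.ne']

lemma dynStep_const_upper (hnu : nu ≠ 0) (hk : 1 ≤ k) (hlamk : lam * (k + Phi) = 1)
    (hC : CC mu nu = C) (hD : DD mu nu = D) (hCD : 1 / C + 1 / D = 1) (hΦD : Phi < D)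
    (hD1 : D * Phi ≤ 1) (n : ℕ) :
    dynStep lam nu mu (nu * (D * lam * Phi ^ (2 * n)) / 2, 1 - Phi / D, n) =
      (nu * (D * lam * Phi ^ (2 * (n + 1))) / 2, 1 - Phi / D, n + 1) := by
  have hlam : 0 < lam := pos_of_mul_add_Phi_eq_one hlamk
  have hD0 : 0 < D := Phi_pos.trans hΦD
  have hp : 1 / CC mu nu < 1 - Phi / D := by
    rw [hC, eq_sub_of_add_eq hCD]; linarith [div_lt_div_of_pos_right Phi_lt_one hD0]
  have hx : (1 - DD mu nu * (1 - (1 - Phi / D))) * (D * lam * Phi ^ (2 * n)) =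
      D * lam * Phi ^ (2 * (n + 1)) := by
    rw [hD, sub_sub_cancel, mul_div_cancel₀ _ hD0.ne']
    linear_combination (-D * lam * Phi ^ (2 * n)) * Phi_sq
  rw [dynStep_of_inv_CC_lt hnu hk hlamk hp hx (inWindow_of_Phi_lt hlam hΦD hD1 _),
    mul_pow_succ_div_mul_pow hlam.ne' Phi_pos.ne']

lemma dynSeq_zero_of_one_lt_mul_Phi (hnu : nu ≠ 0) (hlam : 0 < lam) (heta : eta = lam * Phi)
    (hC : CC mu nu = C) (hC1 : 1 < C * Phi) :
    dynSeq lam eta nu mu 0 = (nu * (C * lam * Phi ^ (2 * 0 + 1)) / 2, 1 / (C * Phi), 0) := by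
  have h0 : lam * Phi ^ (2 * 0) < C * lam * Phi ^ (2 * 0 + 1) := by
    simp only [mul_zero, pow_zero, zero_add, pow_one]; nlinarith
  rw [dynSeq_zero_eq hnu heta hC (by ring) (Nat.sInf_eq_zero.2 (Or.inl h0)),
    mul_pow_div_mul_pow_succ hlam.ne' Phi_pos.ne']

lemma dynSeq_periodic (hnu : nu ≠ 0) (hk : 1 ≤ k) (hlamk : lam * (k + Phi) = 1)
    (heta : eta = lam * Phi) (hC : CC mu nu = C) (hD : DD mu nu = D) (hCD : 1 / C + 1 / D = 1)
    (hC1 : 1 < C * Phi) (hC3 : C * Phi ^ 3 ≤ 1) (hD1 : 1 < D * Phi) (hD3 : D * Phi ^ 3 ≤ 1)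
    (j : ℕ) :
    dynSeq lam eta nu mu (2 * j) = (nu * (C * lam * Phi ^ (2 * j + 1)) / 2, 1 / (C * Phi), j) ∧
      dynSeq lam eta nu mu (2 * j + 1) =
        (nu * (D * lam * Phi ^ (2 * j + 2)) / 2, 1 - 1 / (D * Phi), j) := by
  have hlam : 0 < lam := pos_of_mul_add_Phi_eq_one hlamk
  have hnext : ∀ j, dynSeq lam eta nu mu (2 * j) =
      (nu * (C * lam * Phi ^ (2 * j + 1)) / 2, 1 / (C * Phi), j) →
      dynSeq lam eta nu mu (2 * j + 1) =
        (nu * (D * lam * Phi ^ (2 * j + 2)) / 2, 1 - 1 / (D * Phi), j) := fun j h => by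
    rw [dynSeq, h, dynStep_periodic_even hnu hk hlamk hC hD hCD hC1 hD1 hD3]
  induction j with
  | zero =>
    have h0 := dynSeq_zero_of_one_lt_mul_Phi hnu hlam heta hC hC1
    exact ⟨h0, hnext 0 h0⟩
  | succ j ih =>
    have h : dynSeq lam eta nu mu (2 * (j + 1)) =
        (nu * (C * lam * Phi ^ (2 * (j + 1) + 1)) / 2, 1 / (C * Phi), j + 1) := by
      show dynStep lam nu mu (dynSeq lam eta nu mu (2 * j + 1)) = _
      rw [ih.2, dynStep_periodic_odd hnu hlam hC hCD hC1 hC3 hD1]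
    exact ⟨h, hnext _ h⟩

lemma dynSeq_const_lower (hnu : nu ≠ 0) (hlam : 0 < lam) (heta : eta = lam * Phi)
    (hC : CC mu nu = C) (hΦC : Phi < C) (hC1 : C * Phi ≤ 1) (n : ℕ) :
    dynSeq lam eta nu mu n = (nu * (C * lam * Phi ^ (2 * n + 1)) / 2, Phi / C, n + 1) := by
  induction n with
  | zero =>
    rw [dynSeq_zero_eq hnu heta hC (by ring) (sInf_eq_of_inWindow (r := 0) (κ := 1) hlam.le
        (inWindow_of_Phi_lt hlam hΦC hC1 _))]
    congr 2
    exact mul_pow_succ_div_mul_pow hlam.ne' Phi_pos.ne' C _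
  | succ n ih => rw [dynSeq, ih, dynStep_const_lower hnu hlam hC hΦC hC1]

lemma dynSeq_const_upper (hnu : nu ≠ 0) (hk : 1 ≤ k) (hlamk : lam * (k + Phi) = 1)
    (heta : eta = lam * Phi) (hC : CC mu nu = C) (hD : DD mu nu = D) (hCD : 1 / C + 1 / D = 1)
    (hC1 : 1 < C * Phi) (hΦD : Phi < D) (hD1 : D * Phi ≤ 1) {n : ℕ} (hn : 1 ≤ n) :
    dynSeq lam eta nu mu n = (nu * (D * lam * Phi ^ (2 * n)) / 2, 1 - Phi / D, n) := by
  have hlam : 0 < lam := pos_of_mul_add_Phi_eq_one hlamk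
  induction n, hn using Nat.le_induction with
  | base => rw [dynSeq, dynSeq_zero_of_one_lt_mul_Phi hnu hlam heta hC hC1,
      dynStep_const_upper_zero hnu hk hlamk hC hD hCD hC1 hΦD hD1]
  | succ n _ ih => rw [dynSeq, ih, dynStep_const_upper hnu hk hlamk hC hD hCD hΦD hD1]

end Orbits

section Cases

variable {k : ℕ} {lam eta nu mu : ℝ}

lemma pseq_eq_and_ell_yseq_eq {x p : ℝ} {κ n : ℕ} (hnu : nu ≠ 0)
    (h : dynSeq lam eta nu mu n = (nu * x / 2, p, κ)) :
    pseq lam eta nu mu n = p ∧ ell nu (yseq lam eta nu mu n) = x := by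
  simp only [pseq, yseq, h, ell_mul_div_two hnu, and_self]

lemma pseq_periodic (hnu : 0 < nu) (hk : 1 ≤ k) (hlamk : lam * (k + Phi) = 1)
    (heta : eta = lam * Phi) (h : nu / Phi ^ 3 < |mu|) :
    (∀ n : ℕ, pseq lam eta nu mu (n + 2) = pseq lam eta nu mu n) ∧
      (∀ n : ℕ, Even n →
        pseq lam eta nu mu n = 1 / (CC mu nu * Phi) ∧
        ell nu (yseq lam eta nu mu n) = CC mu nu * lam * Phi ^ (n + 1)) ∧
      (∀ n : ℕ, Odd n →
        pseq lam eta nu mu n = 1 - 1 / (DD mu nu * Phi) ∧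
        ell nu (yseq lam eta nu mu n) = DD mu nu * lam * Phi ^ (n + 1)) := by
  obtain ⟨hC1, hC3, hD1, hD3⟩ : 1 < CC mu nu * Phi ∧ CC mu nu * Phi ^ 3 ≤ 1 ∧
      1 < DD mu nu * Phi ∧ DD mu nu * Phi ^ 3 ≤ 1 := by
    rcases lt_abs.1 h with h | h
    · exact periodic_bounds hnu h
    · obtain ⟨h1, h2, h3, h4⟩ := periodic_bounds hnu h
      rw [CC_eq_DD_neg mu, DD_eq_CC_neg mu]
      exact ⟨h3, h4, h1, h2⟩
  have hmu : mu ≠ 0 := by rintro rfl; norm_num [CC] at hC1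
  have H := dynSeq_periodic hnu.ne' hk hlamk heta rfl rfl (one_div_CC_add_one_div_DD hmu)
    hC1 hC3 hD1 hD3
  have heven j := pseq_eq_and_ell_yseq_eq hnu.ne' (H j).1
  have hodd j := pseq_eq_and_ell_yseq_eq hnu.ne' (H j).2
  refine ⟨fun n => ?_, fun n ⟨j, hj⟩ => ?_, fun n ⟨j, hj⟩ => ?_⟩
  · obtain ⟨j, rfl | rfl⟩ := Nat.even_or_odd' n
    · exact (heven (j + 1)).1.trans (heven j).1.symm
    · exact (hodd (j + 1)).1.trans (hodd j).1.symm
  · rw [hj, ← two_mul]; exact heven j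
  · rw [hj]; exact hodd j

lemma pseq_const_of_pos (hnu : 0 < nu) (hlam : 0 < lam) (heta : eta = lam * Phi)
    (h1 : nu < mu) (h2 : mu ≤ nu / Phi ^ 3) (n : ℕ) :
    pseq lam eta nu mu n = Phi / CC mu nu ∧
      ell nu (yseq lam eta nu mu n) = CC mu nu * lam * Phi ^ (2 * n + 1) :=
  pseq_eq_and_ell_yseq_eq hnu.ne' (dynSeq_const_lower hnu.ne' hlam heta rfl
    (Phi_lt_CC hnu h1) ((CC_mul_Phi_le_one_iff hnu (hnu.trans h1)).2 h2) n)

lemma pseq_const_of_neg (hnu : 0 < nu) (hk : 1 ≤ k) (hlamk : lam * (k + Phi) = 1)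
    (heta : eta = lam * Phi) (h1 : -(nu / Phi ^ 3) ≤ mu) (h2 : mu < -nu) {n : ℕ}
    (hn : 1 ≤ n) :
    pseq lam eta nu mu n = 1 - Phi / DD mu nu ∧
      ell nu (yseq lam eta nu mu n) = DD mu nu * lam * Phi ^ (2 * n) := by
  have h1' : -mu ≤ nu / Phi ^ 3 := by linarith
  have h2' : nu < -mu := by linarith
  have hC1 : 1 < CC mu nu * Phi := CC_eq_DD_neg mu nu ▸ one_lt_DD_mul_Phi hnu h2'
  have hΦD : Phi < DD mu nu := DD_eq_CC_neg mu nu ▸ Phi_lt_CC hnu h2'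
  have hD1 : DD mu nu * Phi ≤ 1 :=
    DD_eq_CC_neg mu nu ▸ (CC_mul_Phi_le_one_iff hnu (hnu.trans h2')).2 h1'
  exact pseq_eq_and_ell_yseq_eq hnu.ne' (dynSeq_const_upper hnu.ne' hk hlamk heta rfl rfl
    (one_div_CC_add_one_div_DD (by linarith)) hC1 hΦD hD1 hn)

end Cases

/-- **Theorem 4.3 (periodicity and explicit form of the dynamical sequences for
λ = 1/(k+Φ)).** With μ̄ = ν/Φ³: if |μ| > μ̄ then p is 2-periodic with the stated
explicit values; if |μ| ≤ μ̄ then p is eventually constant, with the stated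
explicit values on (−μ̄, −ν) and (ν, μ̄). -/
theorem dynamical_sequences_periodic
    (k : ℕ) (hk : 1 ≤ k) (lam eta nu mu : ℝ)
    (hlam : lam = 1 / (k + Phi)) (heta : eta = 1 - k * lam)
    (hnu : 0 < nu) (hmu : nu < |mu|) :
    ((nu / Phi ^ 3 < |mu|) →
      (∀ n : ℕ, pseq lam eta nu mu (n + 2) = pseq lam eta nu mu n) ∧
      (∀ n : ℕ, Even n →
        pseq lam eta nu mu n = 1 / (CC mu nu * Phi) ∧
        ell nu (yseq lam eta nu mu n) = CC mu nu * lam * Phi ^ (n + 1)) ∧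
      (∀ n : ℕ, Odd n →
        pseq lam eta nu mu n = 1 - 1 / (DD mu nu * Phi) ∧
        ell nu (yseq lam eta nu mu n) = DD mu nu * lam * Phi ^ (n + 1))) ∧
    ((|mu| ≤ nu / Phi ^ 3) →
      ∀ n : ℕ, 1 ≤ n → pseq lam eta nu mu (n + 1) = pseq lam eta nu mu n) ∧
    ((-(nu / Phi ^ 3) < mu ∧ mu < -nu) →
      ∀ n : ℕ, 1 ≤ n →
        pseq lam eta nu mu n = 1 - Phi / DD mu nu ∧
        ell nu (yseq lam eta nu mu n) = DD mu nu * lam * Phi ^ (2 * n)) ∧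
    ((nu < mu ∧ mu < nu / Phi ^ 3) →
      ∀ n : ℕ,
        pseq lam eta nu mu n = Phi / CC mu nu ∧
        ell nu (yseq lam eta nu mu n) = CC mu nu * lam * Phi ^ (2 * n + 1)) := by
  have hkΦ : (k : ℝ) + Phi ≠ 0 := (add_pos_of_nonneg_of_pos k.cast_nonneg Phi_pos).ne'
  have hlamk : lam * (k + Phi) = 1 := by rw [hlam, one_div_mul_cancel hkΦ]
  have hlam0 : 0 < lam := pos_of_mul_add_Phi_eq_one hlamk
  have heta' : eta = lam * Phi := by rw [heta]; linear_combination -hlamk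
  refine ⟨pseq_periodic hnu hk hlamk heta', fun h n hn => ?_,
    fun ⟨h1, h2⟩ n hn => pseq_const_of_neg hnu hk hlamk heta' h1.le h2 hn,
    fun ⟨h1, h2⟩ => pseq_const_of_pos hnu hlam0 heta' h1 h2.le⟩
  rcases lt_abs.1 hmu with hpos | hneg
  · have H := pseq_const_of_pos hnu hlam0 heta' hpos (abs_le.1 h).2
    exact (H (n + 1)).1.trans (H n).1.symm
  · have H {n} := pseq_const_of_neg (n := n) hnu hk hlamk heta' (abs_le.1 h).1 (by linarith)
    exact (H (by omega)).1.trans (H hn).1.symm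

end
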